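/- arXiv:2006.03629 — 4 statements merged into one kernel-verified Lean document; each statement's English description precedes it below -/
import Mathlib

section
/- Tight bound on constrained 0-1 loss (Theorem 2 of the paper): let e : C → {0, 1} be a 0-1 per-class loss and e_h its hierarchically constrained version. Then for every g : C → ℝ satisfying the hierarchical constraint Λ (m(c₁) > m(c₂) implies g(c₁) ≥ g(c₂)) and satisfying e(j) ≤ g(j) for all j, we have e(j) ≤ e_h(j) ≤ g(j) for all j ∈ C. -/
/-- Hierarchically constrained version of a per-class loss `f`:
`hcon m f j = max (f j) (max over k with m k < m j of f k)`,
realized as a `sup'` over `insert j {k | m k < m j}` (so the empty inner max defaults to `f j`). -/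
noncomputable def hcon {C : Type*} [Fintype C] [DecidableEq C]
    (m : C → ℕ) (f : C → ℝ) (j : C) : ℝ :=
  (insert j (Finset.univ.filter fun k => m k < m j)).sup'
    (Finset.insert_nonempty _ _) f

/-- Theorem 2 of the paper: the constrained 0-1 loss `e_h` is a tight bound:
`e ≤ e_h ≤ g` for every `g` satisfying the hierarchical constraint with `e ≤ g`. -/
theorem tight_bound_constrained_zero_one_loss
    {C : Type*} [Fintype C] [DecidableEq C] (m : C → ℕ) (e g : C → ℝ)
    (h01 : ∀ j : C, e j = 0 ∨ e j = 1)
    (hΛ : ∀ c₁ c₂ : C, m c₁ > m c₂ → g c₁ ≥ g c₂)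
    (heg : ∀ j : C, e j ≤ g j) :
    ∀ j : C, e j ≤ hcon m e j ∧ hcon m e j ≤ g j := by
  intro j
  constructor
  · exact Finset.le_sup' e (Finset.mem_insert_self j _)
  · apply Finset.sup'_le
    intro k hk
    rcases Finset.mem_insert.mp hk with rfl | hk
    · exact heg k
    · simp only [Finset.mem_filter] at hk
      exact (heg k).trans (hΛ j k hk.2)
end

section
/- Sandwich bound for the hierarchical class-based curriculum loss (Theorem 3 of the paper): let C be a finite set of n classes with level function m : C → ℕ, let e : C → {0,1} and l : C → ℝ with e(j) ≤ l(j) for all j. Let e_h and l_h be their hierarchically constrained versions, let E = Σ_{j∈C} e_h(j) be capped so that E ≤ n (assume e_h sums to at most n, which holds since e_h is 0-1 valued), and define l_hc = min over s ∈ {0,1}^C of max(Σ_{j∈C} s(j)·l_h(j), n − Σ_{j∈C} s(j) + Σ_{j∈C} e_h(j)). Then Σ_{j∈C} e(j) ≤ l_hc ≤ Σ_{j∈C} g(j) for every g : C → ℝ satisfying the hierarchical constraint Λ (m(c₁) > m(c₂) ⟹ g(c₁) ≥ g(c₂)) with l(j) ≤ g(j) for all j. -/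
/-- Theorem 3 of the paper: the hierarchical class-based curriculum loss is
sandwiched between the total 0-1 loss and the total of any hierarchically
constrained majorant `g` of `l`. -/
theorem hierarchical_curriculum_loss_sandwich
    {C : Type*} [Fintype C] [DecidableEq C] (m : C → ℕ) (e l : C → ℝ)
    (h01 : ∀ j : C, e j = 0 ∨ e j = 1)
    (hel : ∀ j : C, e j ≤ l j)
    (hEcap : (∑ j : C, hcon m e j) ≤ (Fintype.card C : ℝ)) :
    ∀ g : C → ℝ,
      (∀ c₁ c₂ : C, m c₁ > m c₂ → g c₁ ≥ g c₂) →
      (∀ j : C, l j ≤ g j) →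
      (∑ j : C, e j) ≤
        (Finset.univ : Finset (C → Bool)).inf' Finset.univ_nonempty
          (fun s => max (∑ j : C, if s j then hcon m l j else 0)
            ((Fintype.card C : ℝ) - (Finset.univ.filter fun j => s j = true).card
              + ∑ j : C, hcon m e j))
      ∧ (Finset.univ : Finset (C → Bool)).inf' Finset.univ_nonempty
          (fun s => max (∑ j : C, if s j then hcon m l j else 0)
            ((Fintype.card C : ℝ) - (Finset.univ.filter fun j => s j = true).card
              + ∑ j : C, hcon m e j))
        ≤ ∑ j : C, g j := by
  intro g hmono hlg
  have hle : ∀ (f : C → ℝ) (j : C), f j ≤ hcon m f j := fun f j =>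
    Finset.le_sup' f (Finset.mem_insert_self _ _)
  have hhg : ∀ (f : C → ℝ), (∀ j, f j ≤ g j) → ∀ j, hcon m f j ≤ g j := by
    intro f hf j
    apply Finset.sup'_le
    intro k hk
    rcases Finset.mem_insert.mp hk with h | h
    · exact h ▸ hf k
    · exact le_trans (hf k) (hmono j k (Finset.mem_filter.mp h).2)
  constructor
  · apply Finset.le_inf'
    intro s _
    refine le_trans ?_ (le_max_right _ _)
    have h1 : (∑ j : C, e j) ≤ ∑ j : C, hcon m e j :=
      Finset.sum_le_sum fun j _ => hle e j
    have h2 : ((Finset.univ.filter fun j => s j = true).card : ℝ) ≤ Fintype.card C := by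
      exact_mod_cast Finset.card_filter_le _ _
    linarith
  · refine le_trans (Finset.inf'_le _ (Finset.mem_univ (fun _ => true))) ?_
    apply max_le
    · simp only [if_true]
      exact Finset.sum_le_sum fun j _ => hhg l hlg j
    · have huniv : (Finset.univ.filter fun j : C => (true : Bool) = true) = Finset.univ := by simp
      rw [huniv]
      have h3 : (∑ j : C, hcon m e j) ≤ ∑ j : C, g j :=
        Finset.sum_le_sum fun j _ => hhg e (fun j => le_trans (hel j) (hlg j)) j
      simp only [Finset.card_univ]
      linarith
end

section
/- The hierarchical curriculum loss is sandwiched between e_h and l_h: with notation as above (e ≤ l pointwise, e 0-1 valued), Σ_{j∈C} e_h(j) ≤ l_hc ≤ Σ_{j∈C} l_h(j), where l_hc = min_{s ∈ {0,1}^C} max(Σ_j s(j)·l_h(j), n − Σ_j s(j) + Σ_j e_h(j)). -/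
theorem curriculum_loss_between_eh_and_lh
    {C : Type*} [Fintype C] [DecidableEq C] (m : C → ℕ) (e l : C → ℝ)
    (h01 : ∀ j : C, e j = 0 ∨ e j = 1)
    (hel : ∀ j : C, e j ≤ l j) :
    (∑ j : C, hcon m e j) ≤
      (Finset.univ : Finset (C → Bool)).inf' Finset.univ_nonempty
        (fun s => max (∑ j : C, if s j then hcon m l j else 0)
          ((Fintype.card C : ℝ) - (Finset.univ.filter fun j => s j = true).card
            + ∑ j : C, hcon m e j))
    ∧ (Finset.univ : Finset (C → Bool)).inf' Finset.univ_nonempty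
        (fun s => max (∑ j : C, if s j then hcon m l j else 0)
          ((Fintype.card C : ℝ) - (Finset.univ.filter fun j => s j = true).card
            + ∑ j : C, hcon m e j))
      ≤ ∑ j : C, hcon m l j := by
  have hmono : ∀ j : C, hcon m e j ≤ hcon m l j := fun j =>
    Finset.sup'_mono_fun (fun k _ => hel k)
  constructor
  · apply Finset.le_inf'
    intro s _
    refine le_max_of_le_right ?_
    have hcard : ((Finset.univ.filter fun j => s j = true).card : ℝ)
        ≤ (Fintype.card C : ℝ) := by
      exact_mod_cast (Finset.card_filter_le _ _).trans_eq (Finset.card_univ)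
    linarith
  · refine le_trans (Finset.inf'_le _ (Finset.mem_univ (fun _ : C => true))) ?_
    simp only [if_true]
    rw [show (Finset.filter (fun _ : C => True) Finset.univ) = Finset.univ from Finset.filter_true _, Finset.card_univ]
    have : (Fintype.card C : ℝ) - (Fintype.card C : ℝ) + ∑ j : C, hcon m e j
        ≤ ∑ j : C, hcon m l j := by
      have := Finset.sum_le_sum (fun j (_ : j ∈ Finset.univ) => hmono j)
      linarith
    exact max_le le_rfl this
end

section
/- Optimal class selection is achieved by a threshold on sorted losses: let a₁ ≤ a₂ ≤ … ≤ a_n be nonnegative reals sorted in nondecreasing order and E ≥ 0. Then min over s ∈ {0,1}^n of max(Σ_{j=1}^n s_j·a_j, n − Σ_{j=1}^n s_j + E) = min over k ∈ {0,1,…,n} of max(Σ_{j=1}^k a_j, n − k + E). That is, the minimum over all 2^n binary selection vectors is attained by a vector selecting a prefix of the classes with smallest losses. -/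
lemma fin_strictMono_le {c n : ℕ} (f : Fin c → Fin n) (hf : StrictMono f) :
    ∀ m (h : m < c), m ≤ (f ⟨m, h⟩ : ℕ) := by
  intro m
  induction m with
  | zero => intro h; exact Nat.zero_le _
  | succ m ih =>
    intro h
    have h1 : m < c := Nat.lt_of_succ_lt h
    have := hf (show (⟨m, h1⟩ : Fin c) < ⟨m+1, h⟩ from Nat.lt_succ_self m)
    exact Nat.succ_le_of_lt (lt_of_le_of_lt (ih h1) this)

lemma filter_lt_eq_map {n c : ℕ} (hcn : c ≤ n) :
    Finset.univ.filter (fun j : Fin n => (j : ℕ) < c)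
      = Finset.map (Fin.castLEEmb hcn) Finset.univ := by
  ext j
  simp only [Finset.mem_filter, Finset.mem_univ, true_and, Finset.mem_map,
    Fin.castLEEmb, Function.Embedding.coeFn_mk]
  constructor
  · intro hj
    exact ⟨⟨(j : ℕ), hj⟩, by ext; simp⟩
  · rintro ⟨i, rfl⟩
    exact i.2

lemma prefix_sum_eq {n c : ℕ} (hcn : c ≤ n) (a : Fin n → ℝ) :
    (∑ j : Fin n, if (j : ℕ) < c then a j else 0)
      = ∑ i : Fin c, a (Fin.castLE hcn i) := by
  rw [← Finset.sum_filter, filter_lt_eq_map hcn, Finset.sum_map]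
  rfl

lemma prefix_sum_le {n : ℕ} (a : Fin n → ℝ) (hsort : Monotone a)
    (T : Finset (Fin n)) :
    (∑ j : Fin n, if (j : ℕ) < T.card then a j else 0) ≤ ∑ j ∈ T, a j := by
  classical
  set c := T.card with hc
  have hcn : c ≤ n := by simpa using T.card_le_univ
  set e := T.orderIsoOfFin hc.symm with he
  have hmono : StrictMono (fun i : Fin c => ((e i : Fin n))) := fun i j hij =>
    Subtype.coe_lt_coe.mpr (e.strictMono hij)
  have hle : ∀ i : Fin c, (i : ℕ) ≤ ((e i : Fin n) : ℕ) := fun i =>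
    fin_strictMono_le _ hmono i.1 i.2
  have hR : ∑ j ∈ T, a j = ∑ i : Fin c, a (e i) := by
    rw [← Finset.sum_coe_sort T (fun j => a j)]
    exact (Equiv.sum_comp e.toEquiv (fun x => a x)).symm
  rw [prefix_sum_eq hcn, hR]
  exact Finset.sum_le_sum fun i _ => hsort (hle i)

/-- Key combinatorial lemma: the min over all binary selection vectors equals the
min over prefix selections of the sorted losses. -/
theorem curriculum_min_attained_by_prefix
    (n : ℕ) (a : Fin n → ℝ) (ha : ∀ j, 0 ≤ a j) (hsort : Monotone a)
    (E : ℝ) (hE : 0 ≤ E) :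
    (Finset.univ : Finset (Fin n → Bool)).inf' Finset.univ_nonempty
      (fun s => max (∑ j : Fin n, if s j then a j else 0)
        ((n : ℝ) - (Finset.univ.filter fun j => s j = true).card + E))
    = (Finset.range (n + 1)).inf' (Finset.nonempty_range_iff.mpr (Nat.succ_ne_zero n))
      (fun k => max (∑ j : Fin n, if (j : ℕ) < k then a j else 0)
        ((n : ℝ) - k + E)) := by
  classical
  apply le_antisymm
  · -- for each k, the prefix selector gives equal value
    apply Finset.le_inf'
    intro k hk
    have hkn : k ≤ n := Nat.lt_succ_iff.mp (Finset.mem_range.mp hk)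
    apply Finset.inf'_le_of_le _ (Finset.mem_univ (fun j : Fin n => decide ((j : ℕ) < k)))
    have hcard : (Finset.univ.filter fun j : Fin n =>
        (decide ((j : ℕ) < k)) = true).card = k := by
      simp only [decide_eq_true_eq]
      rw [filter_lt_eq_map hkn, Finset.card_map, Finset.card_univ, Fintype.card_fin]
    have hsum : (∑ j : Fin n, if decide ((j : ℕ) < k) then a j else 0)
        = ∑ j : Fin n, if (j : ℕ) < k then a j else 0 := by
      simp only [decide_eq_true_eq]
    rw [hsum, hcard]
  · -- for each s, the prefix of length card gives a smaller value
    apply Finset.le_inf'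
    intro s _
    set T := Finset.univ.filter fun j : Fin n => s j = true with hT
    have hcn : T.card ≤ n := by simpa using T.card_le_univ
    apply Finset.inf'_le_of_le _ (Finset.mem_range.mpr (Nat.lt_succ_of_le hcn))
    have hsum : (∑ j : Fin n, if s j then a j else 0) = ∑ j ∈ T, a j := by
      rw [hT, ← Finset.sum_filter]
    refine max_le_max ?_ le_rfl
    rw [hsum]
    exact prefix_sum_le a hsort T
end
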